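/- arXiv:2105.01518 — 2 statements merged into one kernel-verified Lean document; each statement's English description precedes it below -/
import Mathlib

section
/- In type D_n (n ≥ 4), for i ∈ I = [n], one has 2⟨α_i^∨, ρ − ρ_{I∖{i}}⟩ = 2n − i − 1 if 2 ≤ i ≤ n−2, and = 2n − 2 if i ∈ {1, n−1, n}. -/
/-- Standard dot product on `ℚ^n` (the `ε_s` form an orthonormal basis). -/
def dotV {n : ℕ} (x y : Fin n → ℚ) : ℚ := ∑ j, x j * y j

/-- The coroot `γ^∨ = 2γ / ⟨γ,γ⟩` of a root `γ`, identified with a vector of `ℚ^n`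
via the dot product. -/
def corootV {n : ℕ} (γ : Fin n → ℚ) : Fin n → ℚ := (2 / dotV γ γ) • γ

/-- The simple roots of type `D_n` (1-based index `j ∈ [n]`):
`α_j = ε_j − ε_{j+1}` for `j < n` and `α_n = ε_{n−1} + ε_n`. -/
def alD (n : ℕ) : ℕ → (Fin n → ℚ) := fun j =>
  if h : 1 ≤ j ∧ j < n then
    Pi.single (⟨j - 1, by omega⟩ : Fin n) 1 - Pi.single (⟨j, by omega⟩ : Fin n) 1
  else if h2 : j = n ∧ 2 ≤ n then
    (Pi.single (⟨n - 2, by omega⟩ : Fin n) 1 : Fin n → ℚ) +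
      Pi.single (⟨n - 1, by omega⟩ : Fin n) 1
  else 0

/-- The positive roots of type `D_n` as a `Finset`: `Δ^+ = {ε_s ± ε_t : s < t}`. -/
noncomputable def posFinsetD (n : ℕ) : Finset (Fin n → ℚ) :=
  ((Finset.univ : Finset (Fin n × Fin n)).filter fun p => p.1 < p.2).image
      (fun p => (Pi.single p.1 1 : Fin n → ℚ) - Pi.single p.2 1) ∪
    ((Finset.univ : Finset (Fin n × Fin n)).filter fun p => p.1 < p.2).image
      (fun p => (Pi.single p.1 1 : Fin n → ℚ) + Pi.single p.2 1)

/-- Half the sum of the positive roots of type `D_n` lying in a given set `S`;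
`ρ = rhoSubD n Set.univ` and `ρ_J = rhoSubD n (span of the α_j, j ∈ J)`. -/
noncomputable def rhoSubD (n : ℕ) (S : Set (Fin n → ℚ)) : Fin n → ℚ :=
  (1 / 2 : ℚ) • ∑ α ∈ posFinsetD n, Set.indicator S id α

/-!
Since `α_i` has squared length `2`, `α_i^∨ = α_i`, and `2(ρ − ρ_{I∖{i}})` is the sum of the
positive roots outside `V_i = span {α_j : j ≠ i}`; pairing with `α_i = ε_a ∓ ε_b` only reads off
the coordinates `a` and `b` of that sum. A positive root `ε_s ± ε_t` lies in `V_i` exactly when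
the fundamental coweight `ω_i^∨` vanishes on it: membership by telescoping
`ε_s − ε_t = α_{s+1} + ⋯ + α_t` (coordinates `s t : Fin n` are 0-based, the `α_j` 1-based),
non-membership because `ω_i^∨` kills every `α_j` with `j ≠ i`.
Hence, for a coordinate `c`, the roots `ε_c ± ε_t` (`t > c`) and `ε_s ± ε_c` (`s < c`) each
contribute a constant, and the coordinate is a count of indices above and below `c`.
-/

open Finset

section PairSums

variable {α M : Type*} [Fintype α] [DecidableEq α] [LinearOrder α] [AddCommMonoid M]

lemma sum_sum_Ioi_ite_eq_fst [LocallyFiniteOrderTop α] (c : α) (g : α → α → M) :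
    ∑ s, ∑ t ∈ Ioi s, (if s = c then g s t else 0) = ∑ t ∈ Ioi c, g c t := by
  simp [Finset.sum_ite_irrel]

lemma sum_sum_Ioi_ite_eq_snd [LocallyFiniteOrderTop α] [LocallyFiniteOrderBot α] (c : α)
    (g : α → α → M) :
    ∑ s, ∑ t ∈ Ioi s, (if t = c then g s t else 0) = ∑ s ∈ Iio c, g s c := by
  simp only [Finset.sum_ite_eq', mem_Ioi]
  rw [← Finset.sum_filter, Finset.filter_gt_eq_Iio]

end PairSums

section

variable {n : ℕ}

lemma single_sub_single_injOn :
    Set.InjOn (fun p : Fin n × Fin n => (Pi.single p.1 1 - Pi.single p.2 1 : Fin n → ℚ))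
      {p | p.1 < p.2} := by
  rintro ⟨s, t⟩ (hst : s < t) ⟨s', t'⟩ (hst' : s' < t') h
  have hs := congrFun h s
  have ht := congrFun h t
  simp only [Pi.sub_apply, Pi.single_apply, Fin.ext_iff] at hs ht
  rw [Fin.lt_def] at hst hst'
  simp only [Prod.mk.injEq, Fin.ext_iff]
  split_ifs at hs ht <;> first | omega | linarith

lemma single_add_single_injOn :
    Set.InjOn (fun p : Fin n × Fin n => (Pi.single p.1 1 + Pi.single p.2 1 : Fin n → ℚ))
      {p | p.1 < p.2} := by
  rintro ⟨s, t⟩ (hst : s < t) ⟨s', t'⟩ (hst' : s' < t') h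
  have hs := congrFun h s
  have ht := congrFun h t
  simp only [Pi.add_apply, Pi.single_apply, Fin.ext_iff] at hs ht
  rw [Fin.lt_def] at hst hst'
  simp only [Prod.mk.injEq, Fin.ext_iff]
  split_ifs at hs ht <;> first | omega | linarith

lemma sum_posFinsetD {M : Type*} [AddCommMonoid M] (f : (Fin n → ℚ) → M) :
    ∑ β ∈ posFinsetD n, f β = ∑ s, ∑ t ∈ Ioi s,
      (f (Pi.single s 1 - Pi.single t 1) + f (Pi.single s 1 + Pi.single t 1)) := by
  have hdisj : Disjoint
      ((univ.filter fun p : Fin n × Fin n => p.1 < p.2).image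
        fun p => (Pi.single p.1 1 - Pi.single p.2 1 : Fin n → ℚ))
      ((univ.filter fun p : Fin n × Fin n => p.1 < p.2).image
        fun p => (Pi.single p.1 1 + Pi.single p.2 1 : Fin n → ℚ)) := by
    simp only [Finset.disjoint_left, mem_image]
    rintro _ ⟨⟨s, t⟩, -, rfl⟩ ⟨⟨s', t'⟩, -, h⟩
    have := congrArg (fun v : Fin n → ℚ => ∑ j, v j) h
    simp [Finset.sum_add_distrib, Finset.sum_sub_distrib] at this
  rw [posFinsetD, sum_union hdisj,
    sum_image fun p hp q hq => single_sub_single_injOn (by simpa using hp) (by simpa using hq),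
    sum_image fun p hp q hq => single_add_single_injOn (by simpa using hp) (by simpa using hq),
    ← sum_add_distrib, sum_filter, Fintype.sum_prod_type]
  refine sum_congr rfl fun s _ => ?_
  rw [← sum_filter, filter_lt_eq_Ioi]

lemma two_smul_sub_rhoSubD (S : Set (Fin n → ℚ)) :
    (2 : ℚ) • (rhoSubD n Set.univ - rhoSubD n S) = ∑ β ∈ posFinsetD n, Sᶜ.indicator id β := by
  simp only [rhoSubD, Set.indicator_univ, ← smul_sub, smul_smul, ← sum_sub_distrib,
    Set.indicator_compl]
  norm_num

lemma indicator_compl_single_sub_add_apply (S : Set (Fin n → ℚ)) (s t c : Fin n) :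
    Sᶜ.indicator id (Pi.single s 1 - Pi.single t 1 : Fin n → ℚ) c +
        Sᶜ.indicator id (Pi.single s 1 + Pi.single t 1 : Fin n → ℚ) c =
      (if s = c then Sᶜ.indicator 1 (Pi.single s 1 - Pi.single t 1 : Fin n → ℚ) +
          Sᶜ.indicator 1 (Pi.single s 1 + Pi.single t 1 : Fin n → ℚ) else 0) +
      (if t = c then Sᶜ.indicator 1 (Pi.single s 1 + Pi.single t 1 : Fin n → ℚ) -
          Sᶜ.indicator 1 (Pi.single s 1 - Pi.single t 1 : Fin n → ℚ) else (0 : ℚ)) := by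
  classical
  simp only [Set.indicator_apply, Set.mem_compl_iff]
  split_ifs <;> simp_all

lemma two_smul_sub_rhoSubD_apply (S : Set (Fin n → ℚ)) (c : Fin n) :
    ((2 : ℚ) • (rhoSubD n Set.univ - rhoSubD n S)) c =
      ∑ t ∈ Ioi c, (Sᶜ.indicator 1 (Pi.single c 1 - Pi.single t 1 : Fin n → ℚ) +
        Sᶜ.indicator 1 (Pi.single c 1 + Pi.single t 1 : Fin n → ℚ)) +
      ∑ s ∈ Iio c, (Sᶜ.indicator 1 (Pi.single s 1 + Pi.single c 1 : Fin n → ℚ) -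
        Sᶜ.indicator 1 (Pi.single s 1 - Pi.single c 1 : Fin n → ℚ) : ℚ) := by
  rw [two_smul_sub_rhoSubD, Finset.sum_apply, sum_posFinsetD]
  simp only [indicator_compl_single_sub_add_apply, sum_add_distrib,
    sum_sum_Ioi_ite_eq_fst, sum_sum_Ioi_ite_eq_snd]

lemma two_smul_sub_rhoSubD_apply_eq (S : Set (Fin n → ℚ)) (c : Fin n) {a b : ℚ}
    (ha : ∀ t, c < t → Sᶜ.indicator 1 (Pi.single c 1 - Pi.single t 1 : Fin n → ℚ) +
      Sᶜ.indicator 1 (Pi.single c 1 + Pi.single t 1 : Fin n → ℚ) = a)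
    (hb : ∀ s, s < c → Sᶜ.indicator 1 (Pi.single s 1 + Pi.single c 1 : Fin n → ℚ) -
      Sᶜ.indicator 1 (Pi.single s 1 - Pi.single c 1 : Fin n → ℚ) = b) :
    ((2 : ℚ) • (rhoSubD n Set.univ - rhoSubD n S)) c = (n - 1 - c : ℕ) * a + (c : ℕ) * b := by
  rw [two_smul_sub_rhoSubD_apply, sum_congr rfl fun t ht => ha t (mem_Ioi.mp ht),
    sum_congr rfl fun s hs => hb s (mem_Iio.mp hs)]
  simp [Fin.card_Ioi, Fin.card_Iio]

lemma alD_of_lt {j : ℕ} (h1 : 1 ≤ j) (h2 : j < n) :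
    alD n j = (Pi.single ⟨j - 1, by omega⟩ 1 - Pi.single ⟨j, h2⟩ 1 : Fin n → ℚ) := by
  simp [alD, h1, h2]

lemma alD_self (hn : 2 ≤ n) :
    alD n n = (Pi.single ⟨n - 2, by omega⟩ 1 + Pi.single ⟨n - 1, by omega⟩ 1 : Fin n → ℚ) := by
  simp [alD, hn]

lemma dotV_eq_dotProduct (x y : Fin n → ℚ) : dotV x y = x ⬝ᵥ y := rfl

lemma dotV_single_sub_single (a b : Fin n) (v : Fin n → ℚ) :
    dotV (Pi.single a 1 - Pi.single b 1 : Fin n → ℚ) v = v a - v b := by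
  rw [dotV_eq_dotProduct, sub_dotProduct, single_one_dotProduct, single_one_dotProduct]

lemma dotV_single_add_single (a b : Fin n) (v : Fin n → ℚ) :
    dotV (Pi.single a 1 + Pi.single b 1 : Fin n → ℚ) v = v a + v b := by
  rw [dotV_eq_dotProduct, add_dotProduct, single_one_dotProduct, single_one_dotProduct]

lemma corootV_single_sub_single {a b : Fin n} (h : a ≠ b) :
    corootV (Pi.single a 1 - Pi.single b 1 : Fin n → ℚ) = Pi.single a 1 - Pi.single b 1 := by
  norm_num [corootV, dotV_single_sub_single, h, h.symm]

lemma corootV_single_add_single {a b : Fin n} (h : a ≠ b) :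
    corootV (Pi.single a 1 + Pi.single b 1 : Fin n → ℚ) = Pi.single a 1 + Pi.single b 1 := by
  norm_num [corootV, dotV_single_add_single, h, h.symm]

lemma two_mul_dotV_corootV_alD_of_lt {i : ℕ} (h1 : 1 ≤ i) (h2 : i < n) (v : Fin n → ℚ) :
    2 * dotV (corootV (alD n i)) v = ((2 : ℚ) • v) ⟨i - 1, by omega⟩ - ((2 : ℚ) • v) ⟨i, h2⟩ := by
  rw [alD_of_lt h1 h2, corootV_single_sub_single (by simp [Fin.ext_iff]; omega),
    dotV_single_sub_single]
  simp only [Pi.smul_apply, smul_eq_mul]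
  ring

lemma two_mul_dotV_corootV_alD_self (hn : 2 ≤ n) (v : Fin n → ℚ) :
    2 * dotV (corootV (alD n n)) v =
      ((2 : ℚ) • v) ⟨n - 2, by omega⟩ + ((2 : ℚ) • v) ⟨n - 1, by omega⟩ := by
  rw [alD_self hn, corootV_single_add_single (by simp [Fin.ext_iff]; omega),
    dotV_single_add_single]
  simp only [Pi.smul_apply, smul_eq_mul]
  ring

lemma dotV_eq_zero_of_mem_span_alD {S : Set ℕ} {w x : Fin n → ℚ}
    (hw : ∀ j ∈ S, dotV (alD n j) w = 0) (hx : x ∈ Submodule.span ℚ (alD n '' S)) :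
    dotV x w = 0 := by
  have hle : Submodule.span ℚ (alD n '' S) ≤ LinearMap.ker (dotProductEquiv ℚ (Fin n) w) :=
    Submodule.span_le.mpr <| by
      rintro _ ⟨j, hj, rfl⟩
      simpa [dotV_eq_dotProduct, dotProduct_comm] using hw j hj
  simpa [dotV_eq_dotProduct, dotProduct_comm] using hle hx

lemma single_sub_single_mem_span_alD {S : Set ℕ} {s t : Fin n} (hst : s ≤ t)
    (hS : ∀ j : ℕ, (s : ℕ) < j → j ≤ t → j ∈ S) :
    (Pi.single s 1 - Pi.single t 1 : Fin n → ℚ) ∈ Submodule.span ℚ (alD n '' S) := by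
  obtain ⟨t, ht⟩ := t
  induction t with
  | zero =>
    obtain rfl : s = ⟨0, ht⟩ := Fin.ext (Nat.le_zero.mp hst)
    simp
  | succ t ih =>
    rcases eq_or_lt_of_le hst with rfl | hlt
    · simp
    have hlt : (s : ℕ) ≤ t := Nat.lt_succ_iff.mp hlt
    have hstep : (Pi.single ⟨t, by omega⟩ 1 - Pi.single ⟨t + 1, ht⟩ 1 : Fin n → ℚ) ∈
        Submodule.span ℚ (alD n '' S) := by
      have := alD_of_lt (n := n) (j := t + 1) (by omega) ht
      exact Submodule.subset_span ⟨t + 1, hS _ (by omega) le_rfl, this⟩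
    have hsplit : (Pi.single s 1 - Pi.single ⟨t + 1, ht⟩ 1 : Fin n → ℚ) =
        (Pi.single s 1 - Pi.single ⟨t, by omega⟩ 1) +
          (Pi.single ⟨t, by omega⟩ 1 - Pi.single ⟨t + 1, ht⟩ 1) := by abel
    rw [hsplit]
    exact add_mem (ih (by omega) hlt fun j hj hjt => hS j hj (Nat.le_succ_of_le hjt)) hstep

lemma single_add_single_mem_span_alD {S : Set ℕ} (hnS : n ∈ S) {s t : Fin n} (hst : s < t)
    (hS₁ : ∀ j : ℕ, (s : ℕ) < j → j ≤ n - 2 → j ∈ S)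
    (hS₂ : ∀ j : ℕ, (t : ℕ) < j → j ≤ n - 1 → j ∈ S) :
    (Pi.single s 1 + Pi.single t 1 : Fin n → ℚ) ∈ Submodule.span ℚ (alD n '' S) := by
  have hst' : (s : ℕ) < t := hst
  have hn : 2 ≤ n := by have := t.isLt; omega
  have hs : s ≤ ⟨n - 2, by omega⟩ := Fin.le_def.mpr (by simp only; omega)
  have ht : t ≤ ⟨n - 1, by omega⟩ := Fin.le_def.mpr (by simp only; omega)
  have hsplit : (Pi.single s 1 + Pi.single t 1 : Fin n → ℚ) =
      (Pi.single s 1 - Pi.single ⟨n - 2, by omega⟩ 1) +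
        (Pi.single t 1 - Pi.single ⟨n - 1, by omega⟩ 1) + alD n n := by
    rw [alD_self hn]; abel
  rw [hsplit]
  exact add_mem (add_mem (single_sub_single_mem_span_alD hs hS₁)
    (single_sub_single_mem_span_alD ht hS₂)) (Submodule.subset_span ⟨n, hnS, rfl⟩)

def spanAlDExcept (n i : ℕ) : Submodule ℚ (Fin n → ℚ) :=
  Submodule.span ℚ (alD n '' {j | 1 ≤ j ∧ j ≤ n ∧ j ≠ i})

lemma dotV_eq_zero_of_mem_spanAlDExcept_of_le {i : ℕ} (h1 : 1 ≤ i) (h2 : i ≤ n - 2)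
    {x : Fin n → ℚ} (hx : x ∈ spanAlDExcept n i) :
    dotV x (fun k => if (k : ℕ) < i then 1 else 0) = 0 := by
  refine dotV_eq_zero_of_mem_span_alD (fun j hj => ?_) hx
  obtain ⟨hj1, hjn, hji⟩ := hj
  rcases hjn.lt_or_eq with hj | rfl
  · rw [alD_of_lt hj1 hj, dotV_single_sub_single]
    dsimp only
    split_ifs <;> first | omega | norm_num
  · rw [alD_self (by omega), dotV_single_add_single]
    dsimp only
    split_ifs <;> first | omega | norm_num

lemma single_sub_single_mem_spanAlDExcept_iff_of_le {i : ℕ} (h1 : 1 ≤ i) (h2 : i ≤ n - 2)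
    {s t : Fin n} (hst : s < t) :
    (Pi.single s 1 - Pi.single t 1 : Fin n → ℚ) ∈ spanAlDExcept n i ↔
      ¬((s : ℕ) < i ∧ i ≤ t) := by
  have hst' : (s : ℕ) < t := hst
  constructor
  · rintro hmem ⟨hs, ht⟩
    have := dotV_eq_zero_of_mem_spanAlDExcept_of_le h1 h2 hmem
    rw [dotV_single_sub_single, if_pos hs, if_neg (by omega)] at this
    norm_num at this
  · intro h
    exact single_sub_single_mem_span_alD hst.le fun j hj hjt =>
      ⟨by omega, by have := t.isLt; omega, by omega⟩

lemma single_add_single_mem_spanAlDExcept_iff_of_le {i : ℕ} (h1 : 1 ≤ i) (h2 : i ≤ n - 2)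
    {s t : Fin n} (hst : s < t) :
    (Pi.single s 1 + Pi.single t 1 : Fin n → ℚ) ∈ spanAlDExcept n i ↔ i ≤ (s : ℕ) := by
  have hst' : (s : ℕ) < t := hst
  have ht := t.isLt
  constructor
  · intro hmem
    by_contra hs
    have := dotV_eq_zero_of_mem_spanAlDExcept_of_le h1 h2 hmem
    rw [dotV_single_add_single, if_pos (by omega)] at this
    split_ifs at this <;> norm_num at this
  · intro h
    refine single_add_single_mem_span_alD ?_ hst ?_ ?_
    · exact ⟨by omega, le_rfl, by omega⟩
    all_goals exact fun j hj hjn => ⟨by omega, by omega, by omega⟩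

lemma dotV_eq_zero_of_mem_spanAlDExcept_pred (hn : 2 ≤ n) {x : Fin n → ℚ}
    (hx : x ∈ spanAlDExcept n (n - 1)) :
    dotV x (fun k => if (k : ℕ) < n - 1 then 1 else -1) = 0 := by
  refine dotV_eq_zero_of_mem_span_alD (fun j hj => ?_) hx
  obtain ⟨hj1, hjn, hji⟩ := hj
  rcases hjn.lt_or_eq with hj | rfl
  · rw [alD_of_lt hj1 hj, dotV_single_sub_single]
    dsimp only
    split_ifs <;> first | omega | norm_num
  · rw [alD_self hn, dotV_single_add_single]
    dsimp only
    split_ifs <;> first | omega | norm_num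

lemma single_sub_single_mem_spanAlDExcept_pred_iff (hn : 2 ≤ n) {s t : Fin n} (hst : s < t) :
    (Pi.single s 1 - Pi.single t 1 : Fin n → ℚ) ∈ spanAlDExcept n (n - 1) ↔
      (t : ℕ) ≠ n - 1 := by
  have hst' : (s : ℕ) < t := hst
  have ht := t.isLt
  constructor
  · intro hmem ht'
    have := dotV_eq_zero_of_mem_spanAlDExcept_pred hn hmem
    rw [dotV_single_sub_single, if_pos (by omega), if_neg (by omega)] at this
    norm_num at this
  · intro h
    exact single_sub_single_mem_span_alD hst.le fun j hj hjt =>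
      ⟨by omega, by omega, by omega⟩

lemma single_add_single_mem_spanAlDExcept_pred_iff (hn : 2 ≤ n) {s t : Fin n} (hst : s < t) :
    (Pi.single s 1 + Pi.single t 1 : Fin n → ℚ) ∈ spanAlDExcept n (n - 1) ↔
      (t : ℕ) = n - 1 := by
  have hst' : (s : ℕ) < t := hst
  have ht := t.isLt
  constructor
  · intro hmem
    by_contra ht'
    have := dotV_eq_zero_of_mem_spanAlDExcept_pred hn hmem
    rw [dotV_single_add_single, if_pos (by omega), if_pos (by omega)] at this
    norm_num at this
  · intro h
    refine single_add_single_mem_span_alD ?_ hst ?_ ?_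
    · exact ⟨by omega, le_rfl, by omega⟩
    all_goals exact fun j hj hjn => ⟨by omega, by omega, by omega⟩

lemma dotV_eq_zero_of_mem_spanAlDExcept_self {x : Fin n → ℚ} (hx : x ∈ spanAlDExcept n n) :
    dotV x 1 = 0 := by
  refine dotV_eq_zero_of_mem_span_alD (fun j hj => ?_) hx
  obtain ⟨hj1, hjn, hji⟩ := hj
  rw [alD_of_lt hj1 (by omega), dotV_single_sub_single, Pi.one_apply, Pi.one_apply, sub_self]

lemma single_sub_single_mem_spanAlDExcept_self {s t : Fin n} (hst : s ≤ t) :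
    (Pi.single s 1 - Pi.single t 1 : Fin n → ℚ) ∈ spanAlDExcept n n :=
  single_sub_single_mem_span_alD hst fun j hj hjt => ⟨by omega, by omega, by omega⟩

lemma single_add_single_notMem_spanAlDExcept_self (s t : Fin n) :
    (Pi.single s 1 + Pi.single t 1 : Fin n → ℚ) ∉ spanAlDExcept n n := by
  intro hmem
  have := dotV_eq_zero_of_mem_spanAlDExcept_self hmem
  rw [dotV_single_add_single, Pi.one_apply, Pi.one_apply] at this
  norm_num at this

lemma two_smul_sub_rhoSubD_spanAlDExcept_self_apply (c : Fin n) :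
    ((2 : ℚ) • (rhoSubD n Set.univ - rhoSubD n (spanAlDExcept n n))) c = n - 1 := by
  classical
  rw [two_smul_sub_rhoSubD_apply_eq _ c (a := 1) (b := 1)]
  · have hc := c.isLt
    rw [mul_one, mul_one, ← Nat.cast_add, Nat.sub_add_cancel (by omega), Nat.cast_pred (by omega)]
  · intro t ht
    simp [single_sub_single_mem_spanAlDExcept_self ht.le,
      single_add_single_notMem_spanAlDExcept_self]
  · intro s hs
    simp [single_sub_single_mem_spanAlDExcept_self hs.le,
      single_add_single_notMem_spanAlDExcept_self]

lemma two_smul_sub_rhoSubD_spanAlDExcept_of_le_apply_pred {i : ℕ} (h1 : 1 ≤ i)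
    (h2 : i ≤ n - 2) :
    ((2 : ℚ) • (rhoSubD n Set.univ - rhoSubD n (spanAlDExcept n i))) ⟨i - 1, by omega⟩ =
      2 * n - i - 1 := by
  classical
  rw [two_smul_sub_rhoSubD_apply_eq _ _ (a := 2) (b := 1)]
  · simp only [Nat.cast_sub (by omega : i - 1 ≤ n - 1), Nat.cast_sub (by omega : 1 ≤ n),
      Nat.cast_sub h1]
    push_cast
    ring
  all_goals
    intro t ht
    simp only [Set.indicator_apply, Set.mem_compl_iff, SetLike.mem_coe,
      single_sub_single_mem_spanAlDExcept_iff_of_le h1 h2 ht,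
      single_add_single_mem_spanAlDExcept_iff_of_le h1 h2 ht]
    rw [Fin.lt_def] at ht
    dsimp only at *
    split_ifs <;> first | omega | norm_num

lemma two_smul_sub_rhoSubD_spanAlDExcept_of_le_apply_self {i : ℕ} (h1 : 1 ≤ i)
    (h2 : i ≤ n - 2) :
    ((2 : ℚ) • (rhoSubD n Set.univ - rhoSubD n (spanAlDExcept n i))) ⟨i, by omega⟩ = 0 := by
  classical
  rw [two_smul_sub_rhoSubD_apply_eq _ _ (a := 0) (b := 0)]
  · simp
  all_goals
    intro t ht
    simp only [Set.indicator_apply, Set.mem_compl_iff, SetLike.mem_coe,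
      single_sub_single_mem_spanAlDExcept_iff_of_le h1 h2 ht,
      single_add_single_mem_spanAlDExcept_iff_of_le h1 h2 ht]
    rw [Fin.lt_def] at ht
    dsimp only at *
    split_ifs <;> first | omega | norm_num

lemma two_smul_sub_rhoSubD_spanAlDExcept_pred_apply_sub_two (hn : 2 ≤ n) :
    ((2 : ℚ) • (rhoSubD n Set.univ - rhoSubD n (spanAlDExcept n (n - 1)))) ⟨n - 2, by omega⟩ =
      n - 1 := by
  classical
  rw [two_smul_sub_rhoSubD_apply_eq _ _ (a := 1) (b := 1)]
  · rw [mul_one, mul_one, ← Nat.cast_add, show n - 1 - (n - 2) + (n - 2) = n - 1 by omega,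
      Nat.cast_pred (by omega)]
  all_goals
    intro t ht
    simp only [Set.indicator_apply, Set.mem_compl_iff, SetLike.mem_coe,
      single_sub_single_mem_spanAlDExcept_pred_iff hn ht,
      single_add_single_mem_spanAlDExcept_pred_iff hn ht]
    rw [Fin.lt_def] at ht
    dsimp only at *
    split_ifs <;> first | omega | norm_num

lemma two_smul_sub_rhoSubD_spanAlDExcept_pred_apply_pred (hn : 2 ≤ n) :
    ((2 : ℚ) • (rhoSubD n Set.univ - rhoSubD n (spanAlDExcept n (n - 1)))) ⟨n - 1, by omega⟩ =
      -(n - 1) := by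
  classical
  rw [two_smul_sub_rhoSubD_apply_eq _ _ (a := 0) (b := -1)]
  · simp [Nat.cast_sub (by omega : 1 ≤ n)]
  · intro t ht
    rw [Fin.lt_def] at ht
    dsimp only at ht
    omega
  · intro s hs
    simp [single_sub_single_mem_spanAlDExcept_pred_iff hn hs,
      single_add_single_mem_spanAlDExcept_pred_iff hn hs]

lemma two_mul_dotV_corootV_alD_sub_rhoSubD_of_le {i : ℕ} (h1 : 1 ≤ i) (h2 : i ≤ n - 2) :
    2 * dotV (corootV (alD n i)) (rhoSubD n Set.univ - rhoSubD n (spanAlDExcept n i)) =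
      2 * n - i - 1 := by
  rw [two_mul_dotV_corootV_alD_of_lt h1 (by omega),
    two_smul_sub_rhoSubD_spanAlDExcept_of_le_apply_pred h1 h2,
    two_smul_sub_rhoSubD_spanAlDExcept_of_le_apply_self h1 h2, sub_zero]

lemma two_mul_dotV_corootV_alD_sub_rhoSubD_pred (hn : 2 ≤ n) :
    2 * dotV (corootV (alD n (n - 1)))
      (rhoSubD n Set.univ - rhoSubD n (spanAlDExcept n (n - 1))) = 2 * n - 2 := by
  rw [two_mul_dotV_corootV_alD_of_lt (by omega) (by omega)]
  simp only [show n - 1 - 1 = n - 2 by omega]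
  rw [two_smul_sub_rhoSubD_spanAlDExcept_pred_apply_sub_two hn,
    two_smul_sub_rhoSubD_spanAlDExcept_pred_apply_pred hn]
  ring

lemma two_mul_dotV_corootV_alD_sub_rhoSubD_self (hn : 2 ≤ n) :
    2 * dotV (corootV (alD n n)) (rhoSubD n Set.univ - rhoSubD n (spanAlDExcept n n)) =
      2 * n - 2 := by
  rw [two_mul_dotV_corootV_alD_self hn, two_smul_sub_rhoSubD_spanAlDExcept_self_apply,
    two_smul_sub_rhoSubD_spanAlDExcept_self_apply]
  ring

end

theorem typeD_rho_pairing_general (n i : ℕ) (hn : 4 ≤ n) :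
    ((2 ≤ i ∧ i ≤ n - 2) →
      2 * dotV (corootV (alD n i))
          (rhoSubD n Set.univ -
            rhoSubD n
              (Submodule.span ℚ (alD n '' {j | 1 ≤ j ∧ j ≤ n ∧ j ≠ i}) :
                Submodule ℚ (Fin n → ℚ))) =
        2 * (n : ℚ) - (i : ℚ) - 1) ∧
    ((i = 1 ∨ i = n - 1 ∨ i = n) →
      2 * dotV (corootV (alD n i))
          (rhoSubD n Set.univ -
            rhoSubD n
              (Submodule.span ℚ (alD n '' {j | 1 ≤ j ∧ j ≤ n ∧ j ≠ i}) :
                Submodule ℚ (Fin n → ℚ))) =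
        2 * (n : ℚ) - 2) := by
  refine ⟨fun ⟨h1, h2⟩ => two_mul_dotV_corootV_alD_sub_rhoSubD_of_le (by omega) h2, ?_⟩
  rintro (rfl | rfl | rfl)
  · exact (two_mul_dotV_corootV_alD_sub_rhoSubD_of_le (n := n) le_rfl (by omega)).trans
      (by push_cast; ring)
  · exact two_mul_dotV_corootV_alD_sub_rhoSubD_pred (by omega)
  · exact two_mul_dotV_corootV_alD_sub_rhoSubD_self (by omega)

/-- In type `D_n` (`n ≥ 4`), for `i ∈ [n]`,
`2⟨α_i^∨, ρ − ρ_{I∖{i}}⟩ = 2n − i − 1` if `2 ≤ i ≤ n−2`, and `= 2n − 2` if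
`i ∈ {1, n−1, n}`. -/
theorem typeD_rho_pairing (n i : ℕ) (hn : 4 ≤ n) (hi1 : 1 ≤ i) (hi2 : i ≤ n) :
    ((2 ≤ i ∧ i ≤ n - 2) →
      2 * dotV (corootV (alD n i))
          (rhoSubD n Set.univ -
            rhoSubD n
              (Submodule.span ℚ (alD n '' {j | 1 ≤ j ∧ j ≤ n ∧ j ≠ i}) :
                Submodule ℚ (Fin n → ℚ))) =
        2 * (n : ℚ) - (i : ℚ) - 1) ∧
    ((i = 1 ∨ i = n - 1 ∨ i = n) →
      2 * dotV (corootV (alD n i))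
          (rhoSubD n Set.univ -
            rhoSubD n
              (Submodule.span ℚ (alD n '' {j | 1 ≤ j ∧ j ≤ n ∧ j ≠ i}) :
                Submodule ℚ (Fin n → ℚ))) =
        2 * (n : ℚ) - 2) :=
  typeD_rho_pairing_general n i hn
end

section
/- Let J = [p, q] ⊆ [n] be an interval with n ∈ J, and define a directed graph on subsets of J with edges of type (M1) (there exists j with j ∈ N, j+1 ∈ M, M∖{j+1} = N∖{j}) and type (M2) (n ∈ N and M = N ∖ {n}). Then for M = {m_1 < ⋯ < m_r} and N = {n_1 < ⋯ < n_s}, there is a directed path from M to N if and only if r ≤ s and m_ν ≥ n_ν for all ν ∈ [r]. -/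
/-- Edge of type (M1) between Maya diagrams (subsets of the interval `J = [p,q]`):
`M → N` if there exists `j` with `j ∈ N`, `j+1 ∈ M` and `M ∖ {j+1} = N ∖ {j}`. -/
def mayaM1 (p q : ℕ) (M N : Finset ℕ) : Prop :=
  M ⊆ Finset.Icc p q ∧ N ⊆ Finset.Icc p q ∧
    ∃ j, j ∈ N ∧ j + 1 ∈ M ∧ M.erase (j + 1) = N.erase j

/-- Edge of type (M2) (type `B_n`, `n ∈ J = [p,n]`): `M → N` if `n ∈ N` and `M = N ∖ {n}`. -/
def mayaM2 (p n : ℕ) (M N : Finset ℕ) : Prop :=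
  M ⊆ Finset.Icc p n ∧ N ⊆ Finset.Icc p n ∧ n ∈ N ∧ M = N.erase n

/-!
Encode a finite set `S ⊆ ℕ` by its counting function `t ↦ #{x ∈ S | x < t}`. As
`k < #{x ∈ S | x < t}` holds exactly when the `k`-th smallest element of `S` is `< t`, the condition
on the sorted elements says that the counting function of `M` is pointwise at most that of `N`.
An (M1) edge moves an element `j + 1` down to `j`, raising the count at `j + 1` only; an (M2) edge
adds `n`, raising the counts beyond `n`. So edges raise counting functions. Conversely, if `M ≠ N`
and `M` is counted below `N`, pick `i ∈ N ∖ M` where the two counts agree. Moving the least element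
of `M` above `i` down by one, or adding `n` if there is none, is an edge that keeps `M` counted below
`N` and strictly increases the total count over `[0, n + 1]`, so finitely many steps reach `N`.
-/

open Finset

theorem reflTransGen_of_exists_step {α : Type*} {r : α → α → Prop} {P : α → Prop} (μ : α → ℕ)
    {b : α} (step : ∀ a, P a → a ≠ b → ∃ c, r a c ∧ P c ∧ μ c < μ a) {a : α} (ha : P a) :
    Relation.ReflTransGen r a b := by
  induction hμ : μ a using Nat.strong_induction_on generalizing a with
  | _ k ih =>
    by_cases hab : a = b
    · exact hab ▸ .refl
    obtain ⟨c, hac, hc, hlt⟩ := step a ha hab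
    exact .head hac (ih _ (hμ ▸ hlt) hc rfl)

section LinearOrder

variable {α : Type*} [LinearOrder α]

def countBelow (S : Finset α) (t : α) : ℕ := #{x ∈ S | x < t}

theorem lt_countBelow_iff (S : Finset α) (t : α) (k : ℕ) (d : α) :
    k < countBelow S t ↔ k < #S ∧ (S.sort (· ≤ ·)).getD k d < t := by
  set f := S.orderEmbOfFin rfl
  have hf : ∀ (k : ℕ) (hk : k < #S), (S.sort (· ≤ ·)).getD k d = f ⟨k, hk⟩ := fun k hk => by
    rw [orderEmbOfFin_apply, List.getD_eq_getElem _ _ (by rwa [length_sort])]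
    rfl
  constructor
  · intro hk
    have hkS : k < #S := hk.trans_le (card_filter_le _ _)
    refine ⟨hkS, ?_⟩
    rw [hf k hkS]
    by_contra! hft
    have hsub : {x ∈ S | x < t} ⊆ (Iio ⟨k, hkS⟩).map f.toEmbedding := fun x hx => by
      obtain ⟨hxS, hxt⟩ := mem_filter.1 hx
      obtain ⟨i, rfl⟩ : x ∈ Set.range f := by rw [range_orderEmbOfFin]; exact hxS
      exact mem_map_of_mem _ (mem_Iio.2 (f.lt_iff_lt.1 (hxt.trans_le hft)))
    have := card_le_card hsub
    rw [card_map, Fin.card_Iio] at this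
    exact (hk.trans_le this).false
  · rintro ⟨hkS, hkt⟩
    rw [hf k hkS] at hkt
    have hsub : (Iic ⟨k, hkS⟩).map f.toEmbedding ⊆ {x ∈ S | x < t} := fun x hx => by
      obtain ⟨i, hi, rfl⟩ := mem_map.1 hx
      exact mem_filter.2 ⟨orderEmbOfFin_mem _ _ _, (f.le_iff_le.2 (mem_Iic.1 hi)).trans_lt hkt⟩
    have := card_le_card hsub
    rwa [card_map, Fin.card_Iic] at this

theorem countBelow_lt_countBelow_of_mem {S : Finset α} {i b : α} (hi : i ∈ S) (hib : i < b) :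
    countBelow S i < countBelow S b :=
  card_lt_card ⟨fun _ hx => mem_filter.2 ⟨(mem_filter.1 hx).1, (mem_filter.1 hx).2.trans hib⟩,
    fun hsub => (lt_irrefl i (mem_filter.1 (hsub (mem_filter.2 ⟨hi, hib⟩))).2)⟩

theorem countBelow_eq_of_forall_mem_lt {S : Finset α} {a b : α} (hab : a ≤ b)
    (h : ∀ x ∈ S, x < b → x < a) : countBelow S b = countBelow S a := by
  unfold countBelow
  congr 1
  exact filter_congr fun x hx => ⟨h x hx, fun hxa => hxa.trans_le hab⟩

variable [DecidableEq α]

theorem countBelow_insert {S : Finset α} {a : α} (ha : a ∉ S) (t : α) :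
    countBelow (insert a S) t = countBelow S t + if a < t then 1 else 0 := by
  unfold countBelow
  rw [filter_insert]
  split_ifs
  · exact card_insert_of_notMem fun h => ha (mem_filter.1 h).1
  · rfl

theorem countBelow_erase_add {S : Finset α} {a : α} (ha : a ∈ S) (t : α) :
    countBelow (S.erase a) t + (if a < t then 1 else 0) = countBelow S t := by
  rw [← countBelow_insert (notMem_erase a S), insert_erase ha]

end LinearOrder

theorem countBelow_succ (S : Finset ℕ) (t : ℕ) :
    countBelow S (t + 1) = countBelow S t + if t ∈ S then 1 else 0 := by
  unfold countBelow
  simp_rw [Nat.lt_succ_iff_lt_or_eq, filter_or, filter_eq']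
  split_ifs
  · rw [union_singleton, card_insert_of_notMem (by simp)]
  · rw [union_empty, add_zero]

theorem countBelow_zero (S : Finset ℕ) : countBelow S 0 = 0 := by
  simp [countBelow]

theorem countBelow_injective : Function.Injective (countBelow : Finset ℕ → ℕ → ℕ) := by
  intro M N h
  ext x
  have := congrFun h (x + 1)
  rw [countBelow_succ, countBelow_succ, congrFun h x] at this
  split_ifs at this <;> simp_all

theorem countBelow_moveDown {S : Finset ℕ} {j : ℕ} (hj1 : j + 1 ∈ S) (hj : j ∉ S) (t : ℕ) :
    countBelow (insert j (S.erase (j + 1))) t = countBelow S t + if t = j + 1 then 1 else 0 := by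
  have := countBelow_erase_add hj1 t
  rw [countBelow_insert fun h => hj (mem_of_mem_erase h)]
  split_ifs at this ⊢ <;> omega

theorem sorted_le_iff_countBelow_le (M N : Finset ℕ) :
    (#M ≤ #N ∧ ∀ k < #M, (N.sort (· ≤ ·)).getD k 0 ≤ (M.sort (· ≤ ·)).getD k 0) ↔
      countBelow M ≤ countBelow N := by
  constructor
  · rintro ⟨hcard, hle⟩ t
    by_contra! hlt
    obtain ⟨hkM, hkt⟩ := (lt_countBelow_iff M t _ 0).1 hlt
    have := (lt_countBelow_iff N t _ 0).2 ⟨hkM.trans_le hcard, (hle _ hkM).trans_lt hkt⟩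
    exact lt_irrefl _ this
  · intro hle
    have key : ∀ k < #M, k < #N ∧ (N.sort (· ≤ ·)).getD k 0 ≤ (M.sort (· ≤ ·)).getD k 0 := by
      intro k hk
      have hkM := (lt_countBelow_iff M _ k 0).2 ⟨hk, lt_add_one ((M.sort (· ≤ ·)).getD k 0)⟩
      obtain ⟨hkN, hlt⟩ := (lt_countBelow_iff N _ k 0).1 (hkM.trans_le (hle _))
      exact ⟨hkN, Nat.lt_succ_iff.1 hlt⟩
    refine ⟨?_, fun k hk => (key k hk).2⟩
    by_contra! hlt
    exact lt_irrefl _ (key _ hlt).1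

section Maya

variable {p n : ℕ} {M N : Finset ℕ}

theorem mayaM1_iff : mayaM1 p n M N ↔ M ⊆ Icc p n ∧ N ⊆ Icc p n ∧
    ∃ j, j + 1 ∈ M ∧ j ∉ M ∧ N = insert j (M.erase (j + 1)) := by
  refine and_congr_right fun _ => and_congr_right fun _ => exists_congr fun j => ?_
  constructor
  · rintro ⟨hjN, hjM, he⟩
    refine ⟨hjM, fun h => ?_, by rw [he, insert_erase hjN]⟩
    exact notMem_erase j N (he ▸ mem_erase.2 ⟨by omega, h⟩)
  · rintro ⟨hjM, hj, rfl⟩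
    exact ⟨mem_insert_self _ _, hjM, (erase_insert fun h => hj (mem_of_mem_erase h)).symm⟩

theorem mayaM2_iff : mayaM2 p n M N ↔ M ⊆ Icc p n ∧ N ⊆ Icc p n ∧ n ∉ M ∧ N = insert n M := by
  refine and_congr_right fun _ => and_congr_right fun _ => ?_
  constructor
  · rintro ⟨hnN, rfl⟩
    exact ⟨notMem_erase n N, (insert_erase hnN).symm⟩
  · rintro ⟨hn, rfl⟩
    exact ⟨mem_insert_self n M, (erase_insert hn).symm⟩

theorem countBelow_le_of_edge (h : mayaM1 p n M N ∨ mayaM2 p n M N) :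
    countBelow M ≤ countBelow N := by
  intro t
  rcases h with h | h
  · obtain ⟨-, -, j, hj1, hj, rfl⟩ := mayaM1_iff.1 h
    rw [countBelow_moveDown hj1 hj]
    exact Nat.le_add_right _ _
  · obtain ⟨-, -, hn, rfl⟩ := mayaM2_iff.1 h
    rw [countBelow_insert hn]
    exact Nat.le_add_right _ _

theorem countBelow_le_of_reflTransGen
    (h : Relation.ReflTransGen (fun M N => mayaM1 p n M N ∨ mayaM2 p n M N) M N) :
    countBelow M ≤ countBelow N := by
  induction h with
  | refl => exact le_rfl
  | tail _ hedge ih => exact ih.trans (countBelow_le_of_edge hedge)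

/-- For `S ⊆ [0, n]`, `countBelow S` is constant from `n + 1` on, so this window sees all its
changes. -/
def countSum (n : ℕ) (S : Finset ℕ) : ℕ := ∑ t ∈ range (n + 2), countBelow S t

theorem countSum_le_countSum (h : countBelow M ≤ countBelow N) : countSum n M ≤ countSum n N :=
  sum_le_sum fun t _ => h t

theorem countSum_lt_of_edge (h : mayaM1 p n M N ∨ mayaM2 p n M N) :
    countSum n M < countSum n N := by
  refine sum_lt_sum (fun t _ => countBelow_le_of_edge h t) ?_
  rcases h with h | h
  · obtain ⟨hM, -, j, hj1, hj, rfl⟩ := mayaM1_iff.1 h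
    have := (mem_Icc.1 (hM hj1)).2
    exact ⟨j + 1, mem_range.2 (by omega), by rw [countBelow_moveDown hj1 hj]; simp⟩
  · obtain ⟨-, -, hn, rfl⟩ := mayaM2_iff.1 h
    exact ⟨n + 1, mem_range.2 (by omega), by rw [countBelow_insert hn]; simp⟩

theorem exists_mem_notMem_countBelow_eq (hle : countBelow M ≤ countBelow N) (hne : M ≠ N) :
    ∃ i ∈ N, i ∉ M ∧ countBelow M i = countBelow N i := by
  obtain ⟨t, ht⟩ : ∃ t, countBelow M t < countBelow N t := by
    by_contra! h
    exact hne (countBelow_injective (le_antisymm hle h))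
  induction t with
  | zero => simp [countBelow_zero] at ht
  | succ t ih =>
    by_cases hlt : countBelow M t < countBelow N t
    · exact ih hlt
    have heq := le_antisymm (hle t) (not_lt.1 hlt)
    rw [countBelow_succ, countBelow_succ, heq] at ht
    by_cases htM : t ∈ M <;> by_cases htN : t ∈ N <;> simp only [htM, htN, if_true, if_false] at ht
    all_goals first | omega | exact ⟨t, htN, htM, heq⟩

theorem exists_edge_countBelow_le (hM : M ⊆ Icc p n) (hN : N ⊆ Icc p n)
    (hle : countBelow M ≤ countBelow N) (hne : M ≠ N) :
    ∃ M', (mayaM1 p n M M' ∨ mayaM2 p n M M') ∧ countBelow M' ≤ countBelow N := by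
  obtain ⟨i, hiN, hiM, hi⟩ := exists_mem_notMem_countBelow_eq hle hne
  obtain ⟨hpi, hin⟩ := mem_Icc.1 (hN hiN)
  have room : ∀ b, i < b → (∀ x ∈ M, x < b → x ≤ i) → countBelow M b < countBelow N b :=
    fun b hib hb => calc
      countBelow M b = countBelow M i := countBelow_eq_of_forall_mem_lt hib.le fun x hx hxb =>
        lt_of_le_of_ne (hb x hx hxb) (ne_of_mem_of_not_mem hx hiM)
      _ = countBelow N i := hi
      _ < countBelow N b := countBelow_lt_countBelow_of_mem hiN hib
  by_cases hup : ∃ m, m ∈ M ∧ i < m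
  · obtain ⟨hmM, him⟩ := Nat.find_spec hup
    have hmin : ∀ x ∈ M, x < Nat.find hup → x ≤ i := fun x hx hxm =>
      not_lt.1 fun hix => Nat.find_min hup hxm ⟨hx, hix⟩
    obtain ⟨j, hj⟩ : ∃ j, Nat.find hup = j + 1 := ⟨Nat.find hup - 1, by omega⟩
    rw [hj] at hmM him hmin
    have hjM : j ∉ M := fun h => hiM (le_antisymm (hmin j h (lt_add_one j)) (by omega) ▸ h)
    have hjn := (mem_Icc.1 (hM hmM)).2
    refine ⟨insert j (M.erase (j + 1)), Or.inl (mayaM1_iff.2 ⟨hM, ?_, j, hmM, hjM, rfl⟩),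
      fun t => ?_⟩
    · exact insert_subset (mem_Icc.2 ⟨by omega, by omega⟩) ((erase_subset _ _).trans hM)
    rw [countBelow_moveDown hmM hjM]
    split_ifs with ht
    · exact ht ▸ room _ him hmin
    · exact hle t
  · simp only [not_exists, not_and, not_lt] at hup
    have hnM : n ∉ M := fun h => hiM (le_antisymm (hup n h) hin ▸ h)
    refine ⟨insert n M, Or.inr (mayaM2_iff.2 ⟨hM, ?_, hnM, rfl⟩), fun t => ?_⟩
    · exact insert_subset (mem_Icc.2 ⟨hpi.trans hin, le_rfl⟩) hM
    rw [countBelow_insert hnM]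
    split_ifs with ht
    · exact room t (by omega) fun x hx _ => hup x hx
    · exact hle t

end Maya

theorem maya_reachability_typeB_general (n p : ℕ)
    (M N : Finset ℕ) (hM : M ⊆ Finset.Icc p n) (hN : N ⊆ Finset.Icc p n) :
    Relation.ReflTransGen (fun M N => mayaM1 p n M N ∨ mayaM2 p n M N) M N ↔
      (M.card ≤ N.card ∧
        ∀ k < M.card, (N.sort (· ≤ ·)).getD k 0 ≤ (M.sort (· ≤ ·)).getD k 0) := by
  rw [sorted_le_iff_countBelow_le]
  refine ⟨countBelow_le_of_reflTransGen, fun hle => ?_⟩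
  refine reflTransGen_of_exists_step (P := fun S => S ⊆ Icc p n ∧ countBelow S ≤ countBelow N)
    (fun S => countSum n N - countSum n S) (fun S ⟨hS, hSN⟩ hne => ?_) ⟨hM, hle⟩
  obtain ⟨S', hedge, hS'N⟩ := exists_edge_countBelow_le hS hN hSN hne
  have hS' : S' ⊆ Icc p n := hedge.elim (·.2.1) (·.2.1)
  have := countSum_lt_of_edge hedge
  have := countSum_le_countSum (n := n) hS'N
  exact ⟨S', hedge, ⟨hS', hS'N⟩, by omega⟩

/-- For the directed graph on subsets of the interval `J = [p,n] ⊆ [n]`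
(with `n ∈ J`) with edges of types (M1) and (M2), and `M = {m_1 < ⋯ < m_r}`,
`N = {n_1 < ⋯ < n_s}`, there is a directed path from `M` to `N` if and only if
`r ≤ s` and `m_ν ≥ n_ν` for all `ν ∈ [r]`. -/
theorem maya_reachability_typeB (n p : ℕ) (hp : 1 ≤ p) (hpn : p ≤ n)
    (M N : Finset ℕ) (hM : M ⊆ Finset.Icc p n) (hN : N ⊆ Finset.Icc p n) :
    Relation.ReflTransGen (fun M N => mayaM1 p n M N ∨ mayaM2 p n M N) M N ↔
      (M.card ≤ N.card ∧
        ∀ k < M.card, (N.sort (· ≤ ·)).getD k 0 ≤ (M.sort (· ≤ ·)).getD k 0) :=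
  maya_reachability_typeB_general n p M N hM hN
end
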